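/- In the CFI graph Y_f(G) built on a 3-regular graph G, every middle vertex has exactly 19 distinct vertices within graph distance 3 of it (including itself), while every edge vertex has exactly 20. Consequently, any graph isomorphism between Y_f(G) and Y_g(G) maps middle vertices to middle vertices and edge vertices to edge vertices. -/

import Mathlib

/-!
A ball of radius 3 is read off from the walks of length at most 3, which are enumerated with the
two adjacency rules. Since every vertex of `G` has degree 3, an even subset of a neighbourhood
`N(v)` is determined by its bits at any two neighbours, and every pair of bits occurs. So around a
middle vertex `v_T` the ball is the whole gadget at `v` (4 middle and 6 edge vertices), the three
partners `(u,v)_{T(u) ⊕ f(uv)}`, and for each neighbour `u` the two middle vertices at `u`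
adjacent to that partner: 10 + 3 + 6 = 19. Around an edge vertex `(v,u)_b` it is the 4 middle
vertices at `v`, the edge vertices `(v,u)_b` and `(v,u')_β`, `(u',v)_γ` for `u' ≠ u`, the partner
`(u,v)_{b ⊕ f(uv)}`, the two middle vertices at `u` adjacent to it, and the `(u,w)_β` for `w ≠ v`:
4 + 5 + 5 + 2 + 4 = 20 (the vertex `(v,u)_{¬b}` is at distance 4). Graph isomorphisms preserve
the sizes of balls, hence the kind of a vertex.
-/

open SimpleGraph

variable {V : Type*} [Fintype V] [DecidableEq V]

/-- Vertices of the CFI graph `X_f(G)`: a middle vertex `(v, T)` for each vertex `v`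
of `G` and each even subset `T` of the neighbors of `v` (encoding the even-parity
bit-vector `b_u = [u ∈ T]`), and an edge vertex `(v, u, b)` for each directed edge
`(v,u)` of `G` and `b ∈ {0,1}`. -/
def CFIVert (G : SimpleGraph V) [DecidableRel G.Adj] : Type _ :=
  {x : (V × Finset V) ⊕ (V × V × Bool) //
    Sum.elim (fun p => p.2 ⊆ G.neighborFinset p.1 ∧ Even p.2.card)
      (fun p => G.Adj p.1 p.2.1) x}

/-- The CFI graph `X_f(G)` (as an uncolored graph this is `Y_f(G)`): middle vertex
`v_T` is adjacent to edge vertex `(v,u)_b` iff `b = [u ∈ T]`, and edge vertices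
`(v,u)_b` and `(u,v)_{b ⊕ f((u,v))}` are joined for every edge `(u,v)` of `G`. -/
def CFIGraph (G : SimpleGraph V) [DecidableRel G.Adj] (f : Sym2 V → Bool) :
    SimpleGraph (CFIVert G) :=
  SimpleGraph.fromRel fun a b =>
    match a.1, b.1 with
    | .inl (v, T), .inr (w, u, c) => v = w ∧ c = decide (u ∈ T)
    | .inr (v, u, c), .inr (v', u', c') => v = u' ∧ u = v' ∧ c' = (c ^^ f s(v, u))
    | _, _ => False

/-- The coloring of `X_f(G)`: each middle vertex of the gadget at `v` is colored by
`v`, and the pair of edge vertices `(v,u)_0, (v,u)_1` is colored by `(v,u)`. -/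
def CFIColor (G : SimpleGraph V) [DecidableRel G.Adj] : CFIVert G → V ⊕ (V × V) :=
  fun a => Sum.elim (fun p => Sum.inl p.1) (fun p => Sum.inr (p.1, p.2.1)) a.1

/-- `f : E(G) → {0,1}` has even parity if the number of edges with `f(e) = 1` is even. -/
def EvenParity (G : SimpleGraph V) [DecidableRel G.Adj] (f : Sym2 V → Bool) : Prop :=
  Even ((G.edgeFinset.filter fun e => f e = true).card)

open Finset

namespace SimpleGraph

lemma IsRegularOfDegree.card_neighborFinset {α : Type*} [Fintype α] {H : SimpleGraph α}
    [DecidableRel H.Adj] {d : ℕ} (h : H.IsRegularOfDegree d) (v : α) :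
    #(H.neighborFinset v) = d :=
  (H.card_neighborFinset_eq_degree v).trans (h.degree_eq v)

section ClosedBall

variable {α β : Type*} {H : SimpleGraph α} {H' : SimpleGraph β} {x y w : α} {n : ℕ}

-- This is `H.ball x (n + 1)`, written with `dist` as in the statement.
def closedBall (H : SimpleGraph α) (x : α) (n : ℕ) : Set α :=
  {w | H.Reachable x w ∧ H.dist x w ≤ n}

lemma mem_closedBall_iff_exists_walk :
    w ∈ H.closedBall x n ↔ ∃ p : H.Walk x w, p.length ≤ n := by
  refine ⟨fun ⟨hr, hd⟩ => ?_, fun ⟨p, hp⟩ => ⟨p.reachable, (dist_le p).trans hp⟩⟩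
  obtain ⟨p, hp⟩ := hr.exists_walk_length_eq_dist
  exact ⟨p, hp ▸ hd⟩

lemma mem_closedBall_zero : w ∈ H.closedBall x 0 ↔ w = x := by
  simp only [mem_closedBall_iff_exists_walk, nonpos_iff_eq_zero]
  constructor
  · rintro ⟨p, hp⟩
    exact (Walk.eq_of_length_eq_zero hp).symm
  · rintro rfl
    exact ⟨.nil, rfl⟩

lemma mem_closedBall_succ :
    w ∈ H.closedBall x (n + 1) ↔ w = x ∨ ∃ y, H.Adj x y ∧ w ∈ H.closedBall y n := by
  simp only [mem_closedBall_iff_exists_walk]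
  constructor
  · rintro ⟨p, hp⟩
    cases p with
    | nil => exact .inl rfl
    | cons h q => exact .inr ⟨_, h, q, by simpa using hp⟩
  · rintro (rfl | ⟨y, h, q, hq⟩)
    · exact ⟨.nil, by simp⟩
    · exact ⟨.cons h q, by simpa using hq⟩

lemma mem_closedBall_self : x ∈ H.closedBall x n :=
  mem_closedBall_iff_exists_walk.2 ⟨.nil, Nat.zero_le n⟩

lemma mem_closedBall_of_adj (h : H.Adj x y) (hw : w ∈ H.closedBall y n) :
    w ∈ H.closedBall x (n + 1) :=
  mem_closedBall_succ.2 (.inr ⟨y, h, hw⟩)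

lemma Iso.map_mem_closedBall_iff (e : H ≃g H') :
    e w ∈ H'.closedBall (e x) n ↔ w ∈ H.closedBall x n := by
  induction n generalizing x with
  | zero => simp [mem_closedBall_zero]
  | succ n ih => simp [mem_closedBall_succ, e.surjective.exists, ih, e.map_adj_iff]

lemma Iso.ncard_closedBall (e : H ≃g H') (x : α) :
    (H'.closedBall (e x) n).ncard = (H.closedBall x n).ncard := by
  rw [← Set.ncard_image_of_injective _ e.injective]
  congr 1
  ext w'
  obtain ⟨w, rfl⟩ := e.surjective w'
  simp [e.map_mem_closedBall_iff]

end ClosedBall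

end SimpleGraph

namespace Finset

variable {α : Type*} {A S T : Finset α} {a b c : α}

def evenSubsets (A : Finset α) : Finset (Finset α) := A.powerset.filter fun S => Even #S

lemma mem_evenSubsets : S ∈ evenSubsets A ↔ S ⊆ A ∧ Even #S := by
  simp [evenSubsets]

variable [DecidableEq α]

lemma exists_eq_triple (hA : #A = 3) (ha : a ∈ A) (hb : b ∈ A) (hab : a ≠ b) :
    ∃ c, a ≠ c ∧ b ≠ c ∧ A = {a, b, c} := by
  have hb' : b ∈ A.erase a := mem_erase.2 ⟨hab.symm, hb⟩
  obtain ⟨c, hc⟩ := card_eq_one.1 (by simp [card_erase_of_mem, hb', ha, hA] :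
    #((A.erase a).erase b) = 1)
  have hcA : c ∈ (A.erase a).erase b := hc ▸ mem_singleton_self c
  refine ⟨c, (ne_of_mem_erase (mem_of_mem_erase hcA)).symm, (ne_of_mem_erase hcA).symm, ?_⟩
  rw [← insert_erase ha, ← insert_erase hb', hc]

lemma exists_ne_of_card_eq_three (hA : #A = 3) (ha : a ∈ A) : ∃ b ∈ A, a ≠ b := by
  obtain ⟨b, hb⟩ : (A.erase a).Nonempty := by
    rw [← card_pos, card_erase_of_mem ha, hA]; decide
  exact ⟨b, mem_of_mem_erase hb, (ne_of_mem_erase hb).symm⟩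

section Triple

variable (hab : a ≠ b) (hac : a ≠ c) (hbc : b ≠ c)
include hab hac hbc

lemma card_eq_of_subset_triple (hS : S ⊆ {a, b, c}) :
    #S = (if a ∈ S then 1 else 0) + (if b ∈ S then 1 else 0) + (if c ∈ S then 1 else 0) := by
  calc #S = #(({a, b, c} : Finset α).filter (· ∈ S)) := by
        rw [filter_mem_eq_inter, inter_eq_right.2 hS]
    _ = _ := by
      rw [card_filter, sum_insert (by simp [hab, hac]), sum_insert (by simp [hbc]), sum_singleton,
        add_assoc]

lemma even_card_iff_of_subset_triple (hS : S ⊆ {a, b, c}) :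
    Even #S ↔ decide (c ∈ S) = (decide (a ∈ S) ^^ decide (b ∈ S)) := by
  rw [card_eq_of_subset_triple hab hac hbc hS]
  by_cases ha : a ∈ S <;> by_cases hb : b ∈ S <;> by_cases hc : c ∈ S <;>
    simp [ha, hb, hc, Nat.odd_iff]

lemma eq_of_mem_evenSubsets_triple (hS : S ∈ evenSubsets {a, b, c})
    (hT : T ∈ evenSubsets {a, b, c}) (ha : decide (a ∈ S) = decide (a ∈ T))
    (hb : decide (b ∈ S) = decide (b ∈ T)) : S = T := by
  rw [mem_evenSubsets] at hS hT
  have hc : decide (c ∈ S) = decide (c ∈ T) := by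
    rw [(even_card_iff_of_subset_triple hab hac hbc hS.1).1 hS.2,
      (even_card_iff_of_subset_triple hab hac hbc hT.1).1 hT.2, ha, hb]
  have hall : ∀ x ∈ ({a, b, c} : Finset α), decide (x ∈ S) = decide (x ∈ T) := by
    simp only [mem_insert, mem_singleton, forall_eq_or_imp, forall_eq]
    exact ⟨ha, hb, hc⟩
  ext x
  by_cases hx : x ∈ ({a, b, c} : Finset α)
  · exact decide_eq_decide.1 (hall x hx)
  · exact iff_of_false (fun h => hx (hS.1 h)) (fun h => hx (hT.1 h))

lemma exists_mem_evenSubsets_triple (p q : Bool) :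
    ∃ S ∈ evenSubsets {a, b, c}, decide (a ∈ S) = p ∧ decide (b ∈ S) = q := by
  set S := ({a, b, c} : Finset α).filter fun x => x = a ∧ p ∨ x = b ∧ q ∨ x = c ∧ (p ^^ q)
  have ha : decide (a ∈ S) = p := by simp [S, hab, hac]
  have hb : decide (b ∈ S) = q := by simp [S, hab.symm, hbc]
  have hc : decide (c ∈ S) = (p ^^ q) := by
    cases p <;> cases q <;> simp [S, hac.symm, hbc.symm]
  have hsub : S ⊆ {a, b, c} := filter_subset _ _
  refine ⟨S, mem_evenSubsets.2 ⟨hsub, ?_⟩, ha, hb⟩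
  rw [even_card_iff_of_subset_triple hab hac hbc hsub, ha, hb, hc]

lemma exists_decide_mem_eq_of_mem_evenSubsets_triple (hS : S ∈ evenSubsets {a, b, c})
    (hT : T ∈ evenSubsets {a, b, c}) :
    ∃ x ∈ ({a, b, c} : Finset α), decide (x ∈ S) = decide (x ∈ T) := by
  rw [mem_evenSubsets] at hS hT
  by_cases ha : decide (a ∈ S) = decide (a ∈ T)
  · exact ⟨a, by simp, ha⟩
  by_cases hb : decide (b ∈ S) = decide (b ∈ T)
  · exact ⟨b, by simp, hb⟩
  refine ⟨c, by simp, ?_⟩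
  rw [(even_card_iff_of_subset_triple hab hac hbc hS.1).1 hS.2,
    (even_card_iff_of_subset_triple hab hac hbc hT.1).1 hT.2]
  revert ha hb
  generalize decide (a ∈ S) = p, decide (a ∈ T) = p', decide (b ∈ S) = q, decide (b ∈ T) = q'
  revert p p' q q'
  decide

end Triple

section CardThree

variable (hA : #A = 3)
include hA

lemma card_evenSubsets_of_card_eq_three : #(evenSubsets A) = 4 := by
  obtain ⟨a, ha⟩ := card_pos.1 (hA ▸ Nat.succ_pos 2 : 0 < #A)
  obtain ⟨b, hb, hab⟩ := exists_ne_of_card_eq_three hA ha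
  obtain ⟨c, hac, hbc, rfl⟩ := exists_eq_triple hA ha hb hab
  calc #(evenSubsets {a, b, c}) = #(univ : Finset (Bool × Bool)) :=
        card_nbij (fun S => (decide (a ∈ S), decide (b ∈ S))) (fun _ _ => mem_univ _)
          (fun S hS T hT h => eq_of_mem_evenSubsets_triple hab hac hbc hS hT
            (Prod.ext_iff.1 h).1 (Prod.ext_iff.1 h).2)
          (fun ⟨p, q⟩ _ => by simpa using exists_mem_evenSubsets_triple hab hac hbc p q)
    _ = 4 := rfl

lemma card_filter_evenSubsets_of_card_eq_three (ha : a ∈ A) (β : Bool) :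
    #{S ∈ evenSubsets A | decide (a ∈ S) = β} = 2 := by
  obtain ⟨b, hb, hab⟩ := exists_ne_of_card_eq_three hA ha
  obtain ⟨c, hac, hbc, rfl⟩ := exists_eq_triple hA ha hb hab
  calc #{S ∈ evenSubsets {a, b, c} | decide (a ∈ S) = β} = #(univ : Finset Bool) :=
        card_nbij (fun S => decide (b ∈ S)) (fun _ _ => mem_univ _)
          (fun S hS T hT h => by
            rw [coe_filter] at hS hT
            exact eq_of_mem_evenSubsets_triple hab hac hbc hS.1 hT.1 (hS.2.trans hT.2.symm) h)
          (fun q _ => by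
            obtain ⟨S, hS, hSa, hSb⟩ := exists_mem_evenSubsets_triple hab hac hbc β q
            exact ⟨S, by simpa [hSa] using hS, hSb⟩)
    _ = 2 := rfl

lemma exists_mem_evenSubsets_of_card_eq_three (ha : a ∈ A) (hb : b ∈ A) (hab : a ≠ b)
    (p q : Bool) : ∃ S ∈ evenSubsets A, decide (a ∈ S) = p ∧ decide (b ∈ S) = q := by
  obtain ⟨c, hac, hbc, rfl⟩ := exists_eq_triple hA ha hb hab
  exact exists_mem_evenSubsets_triple hab hac hbc p q

lemma exists_decide_mem_eq_of_card_eq_three (hS : S ∈ evenSubsets A)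
    (hT : T ∈ evenSubsets A) : ∃ x ∈ A, decide (x ∈ S) = decide (x ∈ T) := by
  obtain ⟨a, ha⟩ := card_pos.1 (hA ▸ Nat.succ_pos 2 : 0 < #A)
  obtain ⟨b, hb, hab⟩ := exists_ne_of_card_eq_three hA ha
  obtain ⟨c, hac, hbc, rfl⟩ := exists_eq_triple hA ha hb hab
  exact exists_decide_mem_eq_of_mem_evenSubsets_triple hab hac hbc hS hT

end CardThree

end Finset

lemma xor_xor_swap_cancel {α : Type*} (f : Sym2 α → Bool) (b : Bool) (x y : α) :
    (b ^^ f s(x, y) ^^ f s(y, x)) = b := by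
  rw [Sym2.eq_swap, Bool.xor_assoc, Bool.xor_self, Bool.xor_false]

namespace CFIVert

omit [DecidableEq V]

variable {G : SimpleGraph V} [DecidableRel G.Adj] {x : CFIVert G} {v u : V} {T : Finset V}
  {b : Bool}

def edge (h : G.Adj v u) (b : Bool) : CFIVert G := ⟨.inr (v, u, b), h⟩

def mid (h : T ∈ evenSubsets (G.neighborFinset v)) : CFIVert G :=
  ⟨.inl (v, T), mem_evenSubsets.1 h⟩

lemma mem_evenSubsets_of_val_eq_inl (hx : x.1 = .inl (v, T)) :
    T ∈ evenSubsets (G.neighborFinset v) := by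
  simpa [CFIVert, hx, mem_evenSubsets] using x.2

lemma adj_of_val_eq_inr (hx : x.1 = .inr (v, u, b)) : G.Adj v u := by
  simpa [CFIVert, hx] using x.2

lemma exists_eq_inl_iff : (∃ p h, x = ⟨.inl p, h⟩) ↔ x.1.isLeft := by
  obtain ⟨_ | p, h⟩ := x
  · exact iff_of_true ⟨_, h, rfl⟩ rfl
  · exact iff_of_false (fun ⟨_, _, h⟩ => nomatch congrArg Subtype.val h) Bool.false_ne_true

lemma exists_eq_inr_iff : (∃ p h, x = ⟨.inr p, h⟩) ↔ x.1.isLeft = false := by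
  obtain ⟨_ | p, h⟩ := x
  · exact iff_of_false (fun ⟨_, _, h⟩ => nomatch congrArg Subtype.val h) (nomatch ·)
  · exact iff_of_true ⟨_, h, rfl⟩ rfl

end CFIVert

namespace CFIGraph

variable {G : SimpleGraph V} [DecidableRel G.Adj] {f : Sym2 V → Bool} {x w : CFIVert G}
  {v u : V} {S T : Finset V} {b : Bool}

section Adj

lemma adj_iff_of_val_eq_inl (hx : x.1 = .inl (v, T)) :
    (CFIGraph G f).Adj x w ↔ ∃ u, G.Adj v u ∧ w.1 = .inr (v, u, decide (u ∈ T)) := by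
  obtain ⟨x, hxv⟩ := x
  dsimp only at hx
  subst hx
  refine (fromRel_adj _ _ _).trans ?_
  obtain ⟨⟨v', T'⟩ | ⟨v', u', c⟩, hw⟩ := w
  · simp
  · have hne : (⟨.inl (v, T), hxv⟩ : CFIVert G) ≠ ⟨.inr (v', u', c), hw⟩ :=
      fun h => nomatch congrArg Subtype.val h
    refine (and_iff_right hne).trans ?_
    show (v = v' ∧ c = decide (u' ∈ T)) ∨ False ↔
      ∃ u, G.Adj v u ∧ Sum.inr (v', u', c) = Sum.inr (v, u, decide (u ∈ T))
    constructor
    · rintro (⟨rfl, rfl⟩ | h)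
      · exact ⟨u', hw, rfl⟩
      · exact h.elim
    · rintro ⟨u, -, h⟩
      obtain ⟨rfl, rfl, rfl⟩ : v' = v ∧ u' = u ∧ c = decide (u ∈ T) := by simpa using h
      exact .inl ⟨rfl, rfl⟩

lemma adj_iff_of_val_eq_inr (hx : x.1 = .inr (v, u, b)) :
    (CFIGraph G f).Adj x w ↔
      (∃ S, w.1 = .inl (v, S) ∧ decide (u ∈ S) = b) ∨ w.1 = .inr (u, v, b ^^ f s(v, u)) := by
  obtain ⟨x, hxv⟩ := x
  dsimp only at hx
  subst hx
  refine (fromRel_adj _ _ _).trans ?_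
  obtain ⟨⟨v', T'⟩ | ⟨v', u', c⟩, hw⟩ := w
  · have hne : (⟨.inr (v, u, b), hxv⟩ : CFIVert G) ≠ ⟨.inl (v', T'), hw⟩ :=
      fun h => nomatch congrArg Subtype.val h
    refine (and_iff_right hne).trans ?_
    show False ∨ (v' = v ∧ b = decide (u ∈ T')) ↔
      (∃ S, Sum.inl (v', T') = Sum.inl (v, S) ∧ decide (u ∈ S) = b) ∨
        Sum.inl (v', T') = Sum.inr (u, v, b ^^ f s(v, u))
    simp [eq_comm]
  · have hvu : G.Adj v u := hxv
    show _ ≠ _ ∧ ((v = u' ∧ u = v' ∧ c = (b ^^ f s(v, u))) ∨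
        (v' = u ∧ u' = v ∧ b = (c ^^ f s(v', u')))) ↔
      (∃ S, Sum.inr (v', u', c) = Sum.inl (v, S) ∧ decide (u ∈ S) = b) ∨
        Sum.inr (v', u', c) = Sum.inr (u, v, b ^^ f s(v, u))
    constructor
    · rintro ⟨-, ⟨rfl, rfl, rfl⟩ | ⟨rfl, rfl, rfl⟩⟩
      · exact .inr rfl
      · rw [xor_xor_swap_cancel]
        exact .inr rfl
    · rintro (⟨S, h, -⟩ | h)
      · exact nomatch h
      · obtain ⟨rfl, rfl, rfl⟩ : v' = u ∧ u' = v ∧ c = (b ^^ f s(v, u)) := by simpa using h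
        exact ⟨fun h => hvu.ne (congrArg Prod.fst (Sum.inr_injective (congrArg Subtype.val h))),
          .inl ⟨rfl, rfl, rfl⟩⟩

lemma adj_mid_edge (hS : S ∈ evenSubsets (G.neighborFinset v)) (hu : G.Adj v u) :
    (CFIGraph G f).Adj (.mid hS) (.edge hu (decide (u ∈ S))) :=
  (adj_iff_of_val_eq_inl rfl).2 ⟨u, hu, rfl⟩

lemma adj_edge_mid (hu : G.Adj v u) (hS : S ∈ evenSubsets (G.neighborFinset v))
    (hSu : decide (u ∈ S) = b) : (CFIGraph G f).Adj (.edge hu b) (.mid hS) :=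
  (adj_iff_of_val_eq_inr rfl).2 (.inl ⟨S, rfl, hSu⟩)

lemma adj_edge_edge (hu : G.Adj v u) (b : Bool) :
    (CFIGraph G f).Adj (.edge hu b) (.edge hu.symm (b ^^ f s(v, u))) :=
  (adj_iff_of_val_eq_inr rfl).2 (.inr rfl)

end Adj

/- The balls of radius 3 around `v_T` and `(v,u)_b`, given by the labels of their vertices in
`(V × Finset V) ⊕ (V × V × Bool)`, where they are counted piece by piece. -/

variable (G f) in
def closedBallThreeMid (v : V) (T : Finset V) : Finset ((V × Finset V) ⊕ (V × V × Bool)) :=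
  (evenSubsets (G.neighborFinset v)).image (fun S => .inl (v, S)) ∪
  (G.neighborFinset v ×ˢ univ).image (fun p => .inr (v, p)) ∪
  (G.neighborFinset v).image (fun u => .inr (u, v, decide (u ∈ T) ^^ f s(v, u))) ∪
  (G.neighborFinset v).biUnion fun u =>
    {S ∈ evenSubsets (G.neighborFinset u) | decide (v ∈ S) = (decide (u ∈ T) ^^ f s(v, u))}.image
      fun S => .inl (u, S)

variable (G f) in
def closedBallThreeEdge (v u : V) (b : Bool) : Finset ((V × Finset V) ⊕ (V × V × Bool)) :=
  (evenSubsets (G.neighborFinset v)).image (fun S => .inl (v, S)) ∪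
  insert (.inr (v, u, b)) (((G.neighborFinset v).erase u ×ˢ univ).image fun p => .inr (v, p)) ∪
  insert (.inr (u, v, b ^^ f s(v, u)))
    (((G.neighborFinset v).erase u ×ˢ univ).image fun p => .inr (p.1, v, p.2)) ∪
  {S ∈ evenSubsets (G.neighborFinset u) | decide (v ∈ S) = (b ^^ f s(v, u))}.image
    (fun S => .inl (u, S)) ∪
  ((G.neighborFinset u).erase v ×ˢ univ).image fun p => .inr (u, p)

section Mid

lemma mem_closedBallThreeMid_of_mem_closedBall (hx : x.1 = .inl (v, T))
    (hw : w ∈ (CFIGraph G f).closedBall x 3) : w.1 ∈ closedBallThreeMid G f v T := by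
  simp only [mem_closedBall_succ, mem_closedBall_zero] at hw
  rcases hw with rfl | ⟨y, hxy, hw⟩
  · simp [closedBallThreeMid, hx, CFIVert.mem_evenSubsets_of_val_eq_inl hx]
  obtain ⟨u, hvu, hy⟩ := (adj_iff_of_val_eq_inl hx).1 hxy
  rcases hw with rfl | ⟨z, hyz, hw⟩
  · simp [closedBallThreeMid, hy, hvu]
  rcases (adj_iff_of_val_eq_inr hy).1 hyz with ⟨S, hz, -⟩ | hz
  · rcases hw with rfl | ⟨t, hzt, rfl⟩
    · simp [closedBallThreeMid, hz, CFIVert.mem_evenSubsets_of_val_eq_inl hz]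
    obtain ⟨u', hvu', ht⟩ := (adj_iff_of_val_eq_inl hz).1 hzt
    simp [closedBallThreeMid, ht, hvu']
  · rcases hw with rfl | ⟨t, hzt, rfl⟩
    · simp [closedBallThreeMid, hz, hvu]
    rcases (adj_iff_of_val_eq_inr hz).1 hzt with ⟨S, ht, hS⟩ | ht
    · simp [closedBallThreeMid, ht, hvu, hS, CFIVert.mem_evenSubsets_of_val_eq_inl ht]
    · simp [closedBallThreeMid, ht, hvu]

lemma mem_closedBall_of_mem_closedBallThreeMid (hreg : G.IsRegularOfDegree 3)
    (hx : x.1 = .inl (v, T)) (hw : w.1 ∈ closedBallThreeMid G f v T) :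
    w ∈ (CFIGraph G f).closedBall x 3 := by
  have hv := hreg.card_neighborFinset v
  have hT := CFIVert.mem_evenSubsets_of_val_eq_inl hx
  obtain rfl : x = .mid hT := Subtype.ext hx
  obtain ⟨w, _⟩ := w
  simp only [closedBallThreeMid, mem_union, mem_image, mem_biUnion, mem_filter, mem_product,
    mem_univ, and_true, Prod.exists] at hw
  rcases hw with ((⟨S, hS, rfl⟩ | ⟨u, β, hu, rfl⟩) | ⟨u, hu, rfl⟩) | ⟨u, hu, S, ⟨hS, hSv⟩, rfl⟩
  · obtain ⟨u, hu, hST⟩ := exists_decide_mem_eq_of_card_eq_three hv hS hT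
    have hvu := (mem_neighborFinset _ _ _).1 hu
    exact mem_closedBall_of_adj (adj_mid_edge hT hvu)
      (mem_closedBall_of_adj (adj_edge_mid hvu hS hST) mem_closedBall_self)
  · obtain ⟨u', hu', hne⟩ := exists_ne_of_card_eq_three hv hu
    obtain ⟨S, hS, hSu', rfl⟩ :=
      exists_mem_evenSubsets_of_card_eq_three hv hu' hu hne.symm (decide (u' ∈ T)) β
    have hvu' := (mem_neighborFinset _ _ _).1 hu'
    exact mem_closedBall_of_adj (adj_mid_edge hT hvu') (mem_closedBall_of_adj
      (adj_edge_mid hvu' hS hSu') (mem_closedBall_of_adj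
        (adj_mid_edge hS ((mem_neighborFinset _ _ _).1 hu)) mem_closedBall_self))
  · have hvu := (mem_neighborFinset _ _ _).1 hu
    exact mem_closedBall_of_adj (adj_mid_edge hT hvu)
      (mem_closedBall_of_adj (adj_edge_edge hvu _) mem_closedBall_self)
  · have hvu := (mem_neighborFinset _ _ _).1 hu
    exact mem_closedBall_of_adj (adj_mid_edge hT hvu) (mem_closedBall_of_adj
      (adj_edge_edge hvu _) (mem_closedBall_of_adj
        (adj_edge_mid hvu.symm hS hSv) mem_closedBall_self))

lemma coe_closedBallThreeMid_subset_range :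
    ↑(closedBallThreeMid G f v T) ⊆ Set.range (Subtype.val : CFIVert G → _) := by
  intro r hr
  refine ⟨⟨r, ?_⟩, rfl⟩
  simp only [mem_coe, closedBallThreeMid, mem_union, mem_image, mem_biUnion, mem_filter,
    mem_product, mem_univ, and_true, mem_neighborFinset, mem_evenSubsets] at hr
  rcases hr with ((⟨S, hS, rfl⟩ | ⟨⟨u, β⟩, hu, rfl⟩) | ⟨u, hu, rfl⟩) | ⟨u, hu, S, ⟨hS, -⟩, rfl⟩
  exacts [hS, hu, hu.symm, hS]

lemma card_closedBallThreeMid (hreg : G.IsRegularOfDegree 3) :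
    #(closedBallThreeMid G f v T) = 19 := by
  rw [closedBallThreeMid,
    card_union_of_disjoint (by simp [Finset.disjoint_left]; grind [SimpleGraph.irrefl]),
    card_union_of_disjoint (by simp [Finset.disjoint_left]; grind [SimpleGraph.irrefl]),
    card_union_of_disjoint (by simp [Finset.disjoint_left]),
    card_image_of_injective _ fun _ _ h => congrArg Prod.snd (Sum.inl_injective h),
    card_image_of_injective _ fun _ _ h => congrArg Prod.snd (Sum.inr_injective h),
    card_image_of_injective _ fun _ _ h => congrArg Prod.fst (Sum.inr_injective h),
    card_biUnion (by
      simp [Set.PairwiseDisjoint, Set.Pairwise, Function.onFun, Finset.disjoint_left]; grind),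
    sum_const_nat (m := 2) fun u hu => by
      rw [card_image_of_injective _ fun _ _ h => congrArg Prod.snd (Sum.inl_injective h),
        card_filter_evenSubsets_of_card_eq_three (hreg.card_neighborFinset u)
          ((mem_neighborFinset _ _ _).2 ((mem_neighborFinset _ _ _).1 hu).symm)],
    card_evenSubsets_of_card_eq_three (hreg.card_neighborFinset v), card_product,
    hreg.card_neighborFinset v]
  rfl

end Mid

section Edge

lemma mem_closedBallThreeEdge_of_mem_closedBall (hx : x.1 = .inr (v, u, b))
    (hw : w ∈ (CFIGraph G f).closedBall x 3) : w.1 ∈ closedBallThreeEdge G f v u b := by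
  have hnbr {y : CFIVert G} (hxy : (CFIGraph G f).Adj x y) :
      y.1 ∈ closedBallThreeEdge G f v u b := by
    rcases (adj_iff_of_val_eq_inr hx).1 hxy with ⟨S, hy, -⟩ | hy
    · simp [closedBallThreeEdge, hy, CFIVert.mem_evenSubsets_of_val_eq_inl hy]
    · simp [closedBallThreeEdge, hy]
  simp only [mem_closedBall_succ, mem_closedBall_zero] at hw
  rcases hw with rfl | ⟨y, hxy, hw⟩
  · simp [closedBallThreeEdge, hx]
  rcases hw with rfl | ⟨z, hyz, hw⟩
  · exact hnbr hxy
  rcases (adj_iff_of_val_eq_inr hx).1 hxy with ⟨S, hy, hSu⟩ | hy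
  · obtain ⟨u', hvu', hz⟩ := (adj_iff_of_val_eq_inl hy).1 hyz
    rcases hw with rfl | ⟨t, hzt, rfl⟩
    · by_cases hu' : u' = u
      · subst hu'
        simp [closedBallThreeEdge, hz, hSu]
      · simp [closedBallThreeEdge, hz, hvu', hu']
    rcases (adj_iff_of_val_eq_inr hz).1 hzt with ⟨S', ht, -⟩ | ht
    · simp [closedBallThreeEdge, ht, CFIVert.mem_evenSubsets_of_val_eq_inl ht]
    · by_cases hu' : u' = u
      · subst hu'
        simp [closedBallThreeEdge, ht, hSu]
      · simp [closedBallThreeEdge, ht, hvu', hu']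
  · rcases (adj_iff_of_val_eq_inr hy).1 hyz with ⟨S, hz, hSv⟩ | hz
    · rcases hw with rfl | ⟨t, hzt, rfl⟩
      · simp [closedBallThreeEdge, hz, hSv, CFIVert.mem_evenSubsets_of_val_eq_inl hz]
      obtain ⟨w', huw', ht⟩ := (adj_iff_of_val_eq_inl hz).1 hzt
      by_cases hw' : w' = v
      · subst hw'
        simp [closedBallThreeEdge, ht, hSv]
      · simp [closedBallThreeEdge, ht, huw', hw']
    · rw [xor_xor_swap_cancel, ← hx] at hz
      obtain rfl : z = x := Subtype.ext hz
      rcases hw with rfl | ⟨t, hzt, rfl⟩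
      · simp [closedBallThreeEdge, hx]
      exact hnbr hzt

lemma mem_closedBall_of_mem_closedBallThreeEdge (hreg : G.IsRegularOfDegree 3)
    (hx : x.1 = .inr (v, u, b)) (hw : w.1 ∈ closedBallThreeEdge G f v u b) :
    w ∈ (CFIGraph G f).closedBall x 3 := by
  have hvu := CFIVert.adj_of_val_eq_inr hx
  have hu : u ∈ G.neighborFinset v := (mem_neighborFinset _ _ _).2 hvu
  have hv : v ∈ G.neighborFinset u := (mem_neighborFinset _ _ _).2 hvu.symm
  obtain rfl : x = .edge hvu b := Subtype.ext hx
  obtain ⟨w, _⟩ := w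
  simp only [closedBallThreeEdge, mem_union, mem_insert, mem_image, mem_filter, mem_product,
    mem_univ, and_true, mem_erase, Prod.exists] at hw
  rcases hw with (((⟨S, hS, rfl⟩ | rfl | ⟨u', β, ⟨hne, hu'⟩, rfl⟩) | rfl |
    ⟨u', γ, ⟨hne, hu'⟩, rfl⟩) | ⟨S, ⟨hS, hSv⟩, rfl⟩) | ⟨w', β, ⟨hne, hw'⟩, rfl⟩
  · obtain ⟨u', hu', hne⟩ := exists_ne_of_card_eq_three (hreg.card_neighborFinset v) hu
    obtain ⟨T, hT, hTu, hTu'⟩ := exists_mem_evenSubsets_of_card_eq_three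
      (hreg.card_neighborFinset v) hu hu' hne b (decide (u' ∈ S))
    have hvu' := (mem_neighborFinset _ _ _).1 hu'
    exact mem_closedBall_of_adj (adj_edge_mid hvu hT hTu) (mem_closedBall_of_adj
      (adj_mid_edge hT hvu') (mem_closedBall_of_adj
        (adj_edge_mid hvu' hS hTu'.symm) mem_closedBall_self))
  · exact mem_closedBall_self
  · obtain ⟨T, hT, hTu, rfl⟩ := exists_mem_evenSubsets_of_card_eq_three
      (hreg.card_neighborFinset v) hu hu' (Ne.symm hne) b β
    exact mem_closedBall_of_adj (adj_edge_mid hvu hT hTu) (mem_closedBall_of_adj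
      (adj_mid_edge hT ((mem_neighborFinset _ _ _).1 hu')) mem_closedBall_self)
  · exact mem_closedBall_of_adj (adj_edge_edge hvu b) mem_closedBall_self
  · obtain ⟨T, hT, hTu, hTu'⟩ := exists_mem_evenSubsets_of_card_eq_three
      (hreg.card_neighborFinset v) hu hu' (Ne.symm hne) b (γ ^^ f s(v, u'))
    obtain rfl : γ = (decide (u' ∈ T) ^^ f s(v, u')) := by
      rw [hTu', Bool.xor_assoc, Bool.xor_self, Bool.xor_false]
    have hvu' := (mem_neighborFinset _ _ _).1 hu'
    exact mem_closedBall_of_adj (adj_edge_mid hvu hT hTu) (mem_closedBall_of_adj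
      (adj_mid_edge hT hvu') (mem_closedBall_of_adj (adj_edge_edge hvu' _) mem_closedBall_self))
  · exact mem_closedBall_of_adj (adj_edge_edge hvu b)
      (mem_closedBall_of_adj (adj_edge_mid hvu.symm hS hSv) mem_closedBall_self)
  · obtain ⟨S, hS, hSv, rfl⟩ := exists_mem_evenSubsets_of_card_eq_three
      (hreg.card_neighborFinset u) hv hw' (Ne.symm hne) (b ^^ f s(v, u)) β
    exact mem_closedBall_of_adj (adj_edge_edge hvu b) (mem_closedBall_of_adj
      (adj_edge_mid hvu.symm hS hSv) (mem_closedBall_of_adj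
        (adj_mid_edge hS ((mem_neighborFinset _ _ _).1 hw')) mem_closedBall_self))

lemma coe_closedBallThreeEdge_subset_range (hvu : G.Adj v u) :
    ↑(closedBallThreeEdge G f v u b) ⊆ Set.range (Subtype.val : CFIVert G → _) := by
  intro r hr
  refine ⟨⟨r, ?_⟩, rfl⟩
  simp only [mem_coe, closedBallThreeEdge, mem_union, mem_insert, mem_image, mem_filter,
    mem_product, mem_univ, and_true, mem_erase, mem_neighborFinset, mem_evenSubsets] at hr
  rcases hr with (((⟨S, hS, rfl⟩ | rfl | ⟨⟨u', β⟩, ⟨-, hu'⟩, rfl⟩) | rfl |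
    ⟨⟨u', γ⟩, ⟨-, hu'⟩, rfl⟩) | ⟨S, ⟨hS, -⟩, rfl⟩) | ⟨⟨w', β⟩, ⟨-, hw'⟩, rfl⟩
  exacts [hS, hvu, hu', hvu.symm, hu'.symm, hS, hw']

lemma card_closedBallThreeEdge (hreg : G.IsRegularOfDegree 3) (hvu : G.Adj v u) :
    #(closedBallThreeEdge G f v u b) = 20 := by
  have hu : u ∈ G.neighborFinset v := (mem_neighborFinset _ _ _).2 hvu
  have hv : v ∈ G.neighborFinset u := (mem_neighborFinset _ _ _).2 hvu.symm
  rw [closedBallThreeEdge,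
    card_union_of_disjoint (by simp [Finset.disjoint_left]; grind [SimpleGraph.irrefl]),
    card_union_of_disjoint (by simp [Finset.disjoint_left]; grind [SimpleGraph.irrefl]),
    card_union_of_disjoint (by simp [Finset.disjoint_left]; grind [SimpleGraph.irrefl]),
    card_union_of_disjoint (by simp [Finset.disjoint_left]),
    card_insert_of_notMem (by simp), card_insert_of_notMem (by simp),
    card_image_of_injective _ fun _ _ h => congrArg Prod.snd (Sum.inl_injective h),
    card_image_of_injective _ fun _ _ h => congrArg Prod.snd (Sum.inr_injective h),
    card_image_of_injective _ fun _ _ h => by simpa [Prod.ext_iff] using h,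
    card_image_of_injective _ fun _ _ h => congrArg Prod.snd (Sum.inl_injective h),
    card_image_of_injective _ fun _ _ h => congrArg Prod.snd (Sum.inr_injective h),
    card_evenSubsets_of_card_eq_three (hreg.card_neighborFinset v),
    card_filter_evenSubsets_of_card_eq_three (hreg.card_neighborFinset u) hv,
    card_product, card_product, card_erase_of_mem hu, card_erase_of_mem hv,
    hreg.card_neighborFinset v, hreg.card_neighborFinset u]
  rfl

end Edge

lemma ncard_closedBall_three_of_val_eq_inl (hreg : G.IsRegularOfDegree 3)
    (hx : x.1 = .inl (v, T)) : ((CFIGraph G f).closedBall x 3).ncard = 19 := by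
  have hball : (CFIGraph G f).closedBall x 3 = Subtype.val ⁻¹' ↑(closedBallThreeMid G f v T) :=
    Set.ext fun _ => ⟨mem_closedBallThreeMid_of_mem_closedBall hx,
      mem_closedBall_of_mem_closedBallThreeMid hreg hx⟩
  rw [hball, ← card_closedBallThreeMid (f := f) (T := T) hreg, ← Set.ncard_coe_finset]
  exact Set.ncard_preimage_of_injective_subset_range Subtype.val_injective
    coe_closedBallThreeMid_subset_range

lemma ncard_closedBall_three_of_val_eq_inr (hreg : G.IsRegularOfDegree 3)
    (hx : x.1 = .inr (v, u, b)) : ((CFIGraph G f).closedBall x 3).ncard = 20 := by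
  have hvu := CFIVert.adj_of_val_eq_inr hx
  have hball : (CFIGraph G f).closedBall x 3 = Subtype.val ⁻¹' ↑(closedBallThreeEdge G f v u b) :=
    Set.ext fun _ => ⟨mem_closedBallThreeEdge_of_mem_closedBall hx,
      mem_closedBall_of_mem_closedBallThreeEdge hreg hx⟩
  rw [hball, ← card_closedBallThreeEdge (f := f) (b := b) hreg hvu, ← Set.ncard_coe_finset]
  exact Set.ncard_preimage_of_injective_subset_range Subtype.val_injective
    (coe_closedBallThreeEdge_subset_range hvu)

lemma ncard_closedBall_three (hreg : G.IsRegularOfDegree 3) (x : CFIVert G) :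
    ((CFIGraph G f).closedBall x 3).ncard = if x.1.isLeft then 19 else 20 := by
  obtain ⟨⟨v, T⟩ | ⟨v, u, b⟩, h⟩ := x
  · exact ncard_closedBall_three_of_val_eq_inl hreg rfl
  · exact ncard_closedBall_three_of_val_eq_inr hreg rfl

lemma isLeft_val_iso_apply (hreg : G.IsRegularOfDegree 3) {g : Sym2 V → Bool}
    (φ : CFIGraph G f ≃g CFIGraph G g) (x : CFIVert G) : (φ x).1.isLeft = x.1.isLeft := by
  have h := φ.ncard_closedBall (n := 3) x
  rw [ncard_closedBall_three hreg, ncard_closedBall_three hreg] at h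
  revert h
  cases (φ x).1.isLeft <;> cases x.1.isLeft <;> simp

end CFIGraph

theorem cfi_ball_sizes_general {V : Type*} [Fintype V] [DecidableEq V]
    (G : SimpleGraph V) [DecidableRel G.Adj]
    (hreg : ∀ v, G.degree v = 3) (f g : Sym2 V → Bool) :
    (∀ x : CFIVert G, (∃ p h, x = ⟨Sum.inl p, h⟩) →
      {w : CFIVert G | (CFIGraph G f).Reachable x w ∧ (CFIGraph G f).dist x w ≤ 3}.ncard = 19) ∧
    (∀ x : CFIVert G, (∃ p h, x = ⟨Sum.inr p, h⟩) →
      {w : CFIVert G | (CFIGraph G f).Reachable x w ∧ (CFIGraph G f).dist x w ≤ 3}.ncard = 20) ∧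
    (∀ (φ : CFIGraph G f ≃g CFIGraph G g) (x : CFIVert G),
      ((∃ p h, x = ⟨Sum.inl p, h⟩) → ∃ q h', φ x = ⟨Sum.inl q, h'⟩) ∧
      ((∃ p h, x = ⟨Sum.inr p, h⟩) → ∃ q h', φ x = ⟨Sum.inr q, h'⟩)) := by
  refine ⟨?_, ?_, fun φ x => ⟨?_, ?_⟩⟩
  · rintro x ⟨⟨v, T⟩, -, rfl⟩
    exact CFIGraph.ncard_closedBall_three_of_val_eq_inl hreg rfl
  · rintro x ⟨⟨v, u, b⟩, -, rfl⟩
    exact CFIGraph.ncard_closedBall_three_of_val_eq_inr hreg rfl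
  · rw [CFIVert.exists_eq_inl_iff, CFIVert.exists_eq_inl_iff, CFIGraph.isLeft_val_iso_apply hreg]
    exact id
  · rw [CFIVert.exists_eq_inr_iff, CFIVert.exists_eq_inr_iff, CFIGraph.isLeft_val_iso_apply hreg]
    exact id

/-- In `Y_f(G)` over a connected 3-regular graph `G`, every middle vertex has
exactly 19 vertices within distance 3 (itself included), every edge vertex has
exactly 20; consequently every isomorphism `Y_f(G) ≃ Y_g(G)` maps middle vertices
to middle vertices and edge vertices to edge vertices. -/
theorem cfi_ball_sizes {V : Type*} [Fintype V] [DecidableEq V]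
    (G : SimpleGraph V) [DecidableRel G.Adj]
    (hconn : G.Connected) (hreg : ∀ v, G.degree v = 3) (f g : Sym2 V → Bool) :
    (∀ x : CFIVert G, (∃ p h, x = ⟨Sum.inl p, h⟩) →
      {w : CFIVert G | (CFIGraph G f).Reachable x w ∧ (CFIGraph G f).dist x w ≤ 3}.ncard = 19) ∧
    (∀ x : CFIVert G, (∃ p h, x = ⟨Sum.inr p, h⟩) →
      {w : CFIVert G | (CFIGraph G f).Reachable x w ∧ (CFIGraph G f).dist x w ≤ 3}.ncard = 20) ∧
    (∀ (φ : CFIGraph G f ≃g CFIGraph G g) (x : CFIVert G),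
      ((∃ p h, x = ⟨Sum.inl p, h⟩) → ∃ q h', φ x = ⟨Sum.inl q, h'⟩) ∧
      ((∃ p h, x = ⟨Sum.inr p, h⟩) → ∃ q h', φ x = ⟨Sum.inr q, h'⟩)) :=
  cfi_ball_sizes_general G hreg f g
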